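/- Let Λ_P be a Penrose model set. Then a direction u ∈ S¹ is a Λ_P-direction (i.e., parallel to a nonzero element of the difference set Λ_P − Λ_P = {λ − λ' : λ, λ' ∈ Λ_P}) if and only if u is a ℤ[ζ₅]-direction (i.e., parallel to a nonzero element of ℤ[ζ₅]). -/

import Mathlib

/-!
Differences of points of Λ lie in ℤ[ζ₅]; the content is the converse. Writing ℤ[ζ₅] = ℤ[X]/(Φ₅),
the star map is p(ζ₅) ↦ (p(ζ₅²), p(1) mod 5), a ring homomorphism, because Φ₅ vanishes at ζ₅² and
at 1 mod 5. The ring ℤ[ζ₅²] contains the non-real number ζ₅² and the irrational real number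
ζ₅² + ζ₅³ = -τ, so it is dense in ℂ; hence some x of colour 1 has x⋆ deep inside the pentagon
component of the window. Given z ∈ ℤ[ζ₅], the real cyclotomic integer c = 5(a + b(ζ₅ + ζ₅⁴)) has
colour 0, and for suitable integers a, b its conjugate 5(a - bτ) is nonzero (so c ≠ 0) but as small
as we like. So x + cz also lies in Λ, and (x + cz) - x = cz is parallel to z.
-/

open scoped Pointwise

noncomputable section

instance : TopologicalSpace (ZMod 5) := ⊥
instance : DiscreteTopology (ZMod 5) := ⟨rfl⟩

/-- The primitive 5th root of unity ζ₅ = exp(2πi/5). -/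
def zeta5 : ℂ := Complex.exp (2 * Real.pi * Complex.I / 5)

/-- The ring of cyclotomic integers ℤ[ζ₅], as the set of ℤ-combinations of 1, ζ₅, ζ₅², ζ₅³. -/
def Zzeta5 : Set ℂ := {z | ∃ a : Fin 4 → ℤ, z = ∑ j : Fin 4, (a j : ℂ) * zeta5 ^ (j : ℕ)}

/-- The (unique) integer coefficients of an element of ℤ[ζ₅] w.r.t. the basis 1, ζ₅, ζ₅², ζ₅³. -/
def coeffs (z : ℂ) : Fin 4 → ℤ :=
  open Classical in
  if h : z ∈ Zzeta5 then h.choose else 0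

/-- The star map z ↦ (σ₂(z), Σ aⱼ(z) mod 5), with σ₂ the Galois automorphism ζ₅ ↦ ζ₅². -/
def starMap (z : ℂ) : ℂ × ZMod 5 :=
  (∑ j : Fin 4, (coeffs z j : ℂ) * zeta5 ^ (2 * (j : ℕ)),
   ∑ j : Fin 4, ((coeffs z j : ℤ) : ZMod 5))

/-- The regular pentagon P: the convex hull of the 5th roots of unity. -/
def pent : Set ℂ := convexHull ℝ {z : ℂ | z ^ 5 = 1}

/-- The golden ratio τ = (1+√5)/2. -/
def tauR : ℝ := (1 + Real.sqrt 5) / 2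

/-- The Penrose window W_P ⊂ ℝ² × ℤ/5ℤ. -/
def WP : Set (ℂ × ZMod 5) :=
  (pent ×ˢ ({1} : Set (ZMod 5))) ∪ ((-pent) ×ˢ ({2} : Set (ZMod 5))) ∪
    ((tauR • pent) ×ˢ ({3} : Set (ZMod 5))) ∪ ((-(tauR • pent)) ×ˢ ({4} : Set (ZMod 5)))

/-- The shifted window W_P^u = (u, 0) + W_P. -/
def WPu (u : ℂ) : Set (ℂ × ZMod 5) := (fun p => ((u, (0 : ZMod 5)) + p)) '' WP

/-- The model set Λ_P^u = {z ∈ ℤ[ζ₅] : z⋆ ∈ W_P^u}. -/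
def LambdaPu (u : ℂ) : Set ℂ := {z | z ∈ Zzeta5 ∧ starMap z ∈ WPu u}

/-- Λ_P^u is generic if the boundary of W_P^u contains no point of ℤ[ζ₅]⋆. -/
def IsGeneric (u : ℂ) : Prop := ∀ z ∈ Zzeta5, starMap z ∉ frontier (WPu u)

/-- A Penrose model set: a translate t + Λ_P^u of a generic Λ_P^u. -/
def IsPMS (Λ : Set ℂ) : Prop := ∃ t u : ℂ, IsGeneric u ∧ Λ = (fun z => t + z) '' LambdaPu u

/-- v is parallel to u. -/
def Par (u v : ℂ) : Prop := ∃ r : ℝ, r ≠ 0 ∧ v = r • u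

/-- A ℤ[ζ₅]-direction: a direction parallel to a nonzero element of ℤ[ζ₅]. -/
def IsZ5Direction (u : ℂ) : Prop := ∃ z ∈ Zzeta5, z ≠ 0 ∧ Par u z

/-- The line through p in direction u. -/
def line (u p : ℂ) : Set ℂ := {x | ∃ t : ℝ, x = p + t • u}

/-- The X-ray of F in direction u, as a function of the base point of the line. -/
def Xray (u : ℂ) (F : Set ℂ) : ℂ → ℕ := fun p => (F ∩ line u p).ncard

/-- A convex subset C of Λ: a finite subset with C = conv(C) ∩ Λ. -/
def IsConvexSubset (Λ C : Set ℂ) : Prop :=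
  C.Finite ∧ C ⊆ Λ ∧ C = convexHull ℝ C ∩ Λ

open Polynomial

theorem IsPrimitiveRoot.aeval_cyclotomic_int {n : ℕ} (hn : 0 < n) {K : Type*} [Field K]
    [CharZero K] {μ : K} (hμ : IsPrimitiveRoot μ n) : aeval μ (cyclotomic n ℤ) = 0 := by
  rw [cyclotomic_eq_minpoly hμ hn]
  exact minpoly.aeval ℤ μ

theorem IsPrimitiveRoot.aeval_eq_of_aeval_cyclotomic_eq_zero {n : ℕ} (hn : 0 < n) {K : Type*}
    [Field K] [CharZero K] {μ : K} (hμ : IsPrimitiveRoot μ n) {A : Type*} [CommRing A] {y : A}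
    (hy : aeval y (cyclotomic n ℤ) = 0) {p q : ℤ[X]} (h : aeval μ p = aeval μ q) :
    aeval y p = aeval y q := by
  obtain ⟨r, hr⟩ : cyclotomic n ℤ ∣ p - q := by
    rw [cyclotomic_eq_minpoly hμ hn]
    exact minpoly.isIntegrallyClosed_dvd (hμ.isIntegral hn) (by rw [map_sub, h, sub_self])
  rw [← sub_eq_zero, ← map_sub, hr, map_mul, hy, zero_mul]

theorem Complex.add_pow_eq_two_mul_re {w : ℂ} {n : ℕ} (hw : w ^ (n + 1) = 1) :
    w + w ^ n = ((2 * w.re : ℝ) : ℂ) := by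
  have hnorm : Complex.normSq w = 1 := by
    rw [Complex.normSq_eq_norm_sq, Complex.norm_eq_one_of_pow_eq_one hw n.succ_ne_zero, one_pow]
  have hinv : w ^ n = w⁻¹ := eq_inv_of_mul_eq_one_right (by rw [← pow_succ' w n, hw])
  rw [hinv, Complex.inv_def, hnorm, inv_one, Complex.ofReal_one, mul_one, Complex.add_conj]

theorem Complex.exists_eq_ofReal_add_ofReal_mul {w : ℂ} (hw : w.im ≠ 0) (x : ℂ) :
    ∃ a b : ℝ, x = a + b * w := by
  refine ⟨x.re - x.im / w.im * w.re, x.im / w.im, Complex.ext ?_ ?_⟩ <;>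
    · simp only [Complex.add_re, Complex.add_im, Complex.ofReal_re, Complex.ofReal_im,
        Complex.mul_re, Complex.mul_im]
      field_simp
      ring

theorem exists_int_add_int_mul_mem_Ioo {θ : ℝ} (hθ : Irrational θ) {δ : ℝ} (hδ : 0 < δ) :
    ∃ a b : ℤ, (a + b * θ : ℝ) ∈ Set.Ioo 0 δ := by
  have hdense : Dense (AddSubgroup.closure {θ, 1} : Set ℝ) :=
    dense_addSubgroupClosure_pair_iff.2 (by rwa [div_one])
  obtain ⟨s, hs, hsδ⟩ := hdense.exists_mem_open isOpen_Ioo (Set.nonempty_Ioo.2 hδ)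
  obtain ⟨b, a, rfl⟩ := AddSubgroup.mem_closure_pair.1 hs
  exact ⟨a, b, by simpa [add_comm, mul_comm] using hsδ⟩

theorem Subring.dense_of_irrational_of_im_ne_zero (R : Subring ℂ) {θ : ℝ} (hθ : Irrational θ)
    (hθR : (θ : ℂ) ∈ R) {w : ℂ} (hw : w.im ≠ 0) (hwR : w ∈ R) : Dense (R : Set ℂ) := by
  set K := R.topologicalClosure
  have hreal : ∀ a : ℝ, (a : ℂ) ∈ K := by
    let KR : AddSubgroup ℝ := K.toAddSubgroup.comap Complex.ofRealHom.toAddMonoidHom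
    have hclosed : IsClosed (KR : Set ℝ) :=
      R.isClosed_topologicalClosure.preimage Complex.continuous_ofReal
    have hdense : Dense (AddSubgroup.closure {θ, 1} : Set ℝ) :=
      dense_addSubgroupClosure_pair_iff.2 (by rwa [div_one])
    have hsub : AddSubgroup.closure {θ, 1} ≤ KR :=
      (AddSubgroup.closure_le KR).2 (Set.pair_subset (R.le_topologicalClosure hθR) (by simp [KR]))
    exact fun a => closure_minimal hsub hclosed (hdense a)
  rw [dense_iff_closure_eq, Set.eq_univ_iff_forall]
  intro x
  obtain ⟨a, b, rfl⟩ := Complex.exists_eq_ofReal_add_ofReal_mul hw x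
  exact K.add_mem (hreal a) (K.mul_mem (hreal b) (R.le_topologicalClosure hwR))

theorem isPrimitiveRoot_zeta5 : IsPrimitiveRoot zeta5 5 := by
  simpa [zeta5] using Complex.isPrimitiveRoot_exp 5 (by norm_num)

theorem isPrimitiveRoot_zeta5_sq : IsPrimitiveRoot (zeta5 ^ 2) 5 :=
  isPrimitiveRoot_zeta5.pow_of_coprime 2 (by norm_num)

theorem aeval_cyclotomic_five_one : aeval (1 : ZMod 5) (cyclotomic 5 ℤ) = 0 := by
  have : Fact (Nat.Prime 5) := ⟨by norm_num⟩
  rw [aeval_def, eval₂_eq_eval_map, map_cyclotomic, eval_one_cyclotomic_prime]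
  rfl

theorem zeta5_sq_eq_exp : zeta5 ^ 2 = Complex.exp ((4 * Real.pi / 5 : ℝ) * Complex.I) := by
  rw [zeta5, ← Complex.exp_nat_mul]
  push_cast
  ring_nf

theorem im_zeta5_sq_pos : 0 < (zeta5 ^ 2).im := by
  rw [zeta5_sq_eq_exp, Complex.exp_ofReal_mul_I_im]
  exact Real.sin_pos_of_pos_of_lt_pi (by positivity) (by linarith [Real.pi_pos])

theorem two_mul_re_zeta5_sq : 2 * (zeta5 ^ 2).re = -((1 + √5) / 2) := by
  rw [zeta5_sq_eq_exp, Complex.exp_ofReal_mul_I_re,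
    show 4 * Real.pi / 5 = Real.pi - Real.pi / 5 by ring, Real.cos_pi_sub, Real.cos_pi_div_five]
  ring

theorem irrational_two_mul_re_zeta5_sq : Irrational (2 * (zeta5 ^ 2).re) := by
  rw [two_mul_re_zeta5_sq]
  have h5 : Irrational √5 := by norm_num
  simpa using ((h5.natCast_add 1).div_natCast two_ne_zero).neg

theorem zeta5_sq_add_pow_four : zeta5 ^ 2 + (zeta5 ^ 2) ^ 4 = ((2 * (zeta5 ^ 2).re : ℝ) : ℂ) :=
  Complex.add_pow_eq_two_mul_re isPrimitiveRoot_zeta5_sq.pow_eq_one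

theorem mem_Zzeta5_iff {z : ℂ} : z ∈ Zzeta5 ↔ ∃ p : ℤ[X], aeval zeta5 p = z := by
  constructor
  · rintro ⟨a, rfl⟩
    exact ⟨∑ j : Fin 4, C (a j) * X ^ (j : ℕ), by simp⟩
  · rintro ⟨p, rfl⟩
    have hdeg : (p %ₘ cyclotomic 5 ℤ).natDegree < 4 := by
      have := natDegree_modByMonic_lt p (cyclotomic.monic 5 ℤ)
        (cyclotomic.irreducible (by norm_num)).ne_one
      rwa [natDegree_cyclotomic, Nat.totient_prime (by norm_num)] at this
    refine ⟨fun j => (p %ₘ cyclotomic 5 ℤ).coeff j, ?_⟩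
    rw [← aeval_modByMonic_eq_self_of_root
        (isPrimitiveRoot_zeta5.aeval_cyclotomic_int (by norm_num)), aeval_eq_sum_range' hdeg, ← Fin.sum_univ_eq_sum_range]
    simp [zsmul_eq_mul]

theorem add_mem_Zzeta5 {x y : ℂ} (hx : x ∈ Zzeta5) (hy : y ∈ Zzeta5) : x + y ∈ Zzeta5 := by
  obtain ⟨p, rfl⟩ := mem_Zzeta5_iff.1 hx
  obtain ⟨q, rfl⟩ := mem_Zzeta5_iff.1 hy
  exact mem_Zzeta5_iff.2 ⟨p + q, map_add _ p q⟩

theorem sub_mem_Zzeta5 {x y : ℂ} (hx : x ∈ Zzeta5) (hy : y ∈ Zzeta5) : x - y ∈ Zzeta5 := by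
  obtain ⟨p, rfl⟩ := mem_Zzeta5_iff.1 hx
  obtain ⟨q, rfl⟩ := mem_Zzeta5_iff.1 hy
  exact mem_Zzeta5_iff.2 ⟨p - q, map_sub _ p q⟩

theorem coeffs_spec {z : ℂ} (hz : z ∈ Zzeta5) :
    z = ∑ j : Fin 4, (coeffs z j : ℂ) * zeta5 ^ (j : ℕ) := by
  rw [_root_.coeffs, dif_pos hz]
  exact hz.choose_spec

theorem starMap_aeval (p : ℤ[X]) :
    starMap (aeval zeta5 p) = (aeval (zeta5 ^ 2) p, aeval (1 : ZMod 5) p) := by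
  set x := aeval zeta5 p
  set q : ℤ[X] := ∑ j : Fin 4, C (coeffs x j) * X ^ (j : ℕ)
  have hq : aeval zeta5 q = aeval zeta5 p := by
    simpa [q] using (coeffs_spec (mem_Zzeta5_iff.2 ⟨p, rfl⟩)).symm
  have hstar : starMap x = (aeval (zeta5 ^ 2) q, aeval (1 : ZMod 5) q) := by
    simp [starMap, q, pow_mul]
  rw [hstar, isPrimitiveRoot_zeta5.aeval_eq_of_aeval_cyclotomic_eq_zero (by norm_num)
    (isPrimitiveRoot_zeta5_sq.aeval_cyclotomic_int (by norm_num)) hq,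
    isPrimitiveRoot_zeta5.aeval_eq_of_aeval_cyclotomic_eq_zero (by norm_num)
    aeval_cyclotomic_five_one hq]

theorem starMap_add {x y : ℂ} (hx : x ∈ Zzeta5) (hy : y ∈ Zzeta5) :
    starMap (x + y) = starMap x + starMap y := by
  obtain ⟨p, rfl⟩ := mem_Zzeta5_iff.1 hx
  obtain ⟨q, rfl⟩ := mem_Zzeta5_iff.1 hy
  simp only [← map_add, starMap_aeval, Prod.mk_add_mk]

theorem dense_range_aeval_zeta5_sq : Dense (Set.range fun p : ℤ[X] => aeval (zeta5 ^ 2) p) := by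
  have hθ : ((2 * (zeta5 ^ 2).re : ℝ) : ℂ) = aeval (zeta5 ^ 2) (X + X ^ 4 : ℤ[X]) := by
    simp [zeta5_sq_add_pow_four]
  simpa using (aeval (zeta5 ^ 2) : ℤ[X] →ₐ[ℤ] ℂ).range.toSubring.dense_of_irrational_of_im_ne_zero
    irrational_two_mul_re_zeta5_sq ⟨_, hθ.symm⟩ im_zeta5_sq_pos.ne' ⟨X, aeval_X _⟩

theorem dense_starMap_of_colour_one :
    Dense ((fun x => (starMap x).1) '' {x ∈ Zzeta5 | (starMap x).2 = 1}) := by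
  have hdense : Dense ((fun y : ℂ => 1 + 5 * y) '' Set.range fun p : ℤ[X] => aeval (zeta5 ^ 2) p) :=
    (Function.Surjective.denseRange fun w => ⟨(w - 1) / 5, by ring⟩).dense_image
      (by fun_prop) dense_range_aeval_zeta5_sq
  refine hdense.mono ?_
  rintro _ ⟨_, ⟨p, rfl⟩, rfl⟩
  have h5 : (5 : ZMod 5) = 0 := rfl
  refine ⟨aeval zeta5 (1 + 5 * p), ⟨mem_Zzeta5_iff.2 ⟨_, rfl⟩, ?_⟩, ?_⟩ <;>
    (simp only [starMap_aeval]; simp [map_ofNat, h5])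

theorem exists_real_mul_starMap_lt {z : ℂ} (hz : z ∈ Zzeta5) {ε : ℝ} (hε : 0 < ε) :
    ∃ c : ℝ, c ≠ 0 ∧ (c : ℂ) * z ∈ Zzeta5 ∧ ‖(starMap (c * z)).1‖ < ε ∧
      (starMap (c * z)).2 = 0 := by
  obtain ⟨p, rfl⟩ := mem_Zzeta5_iff.1 hz
  set M := ‖aeval (zeta5 ^ 2) p‖
  obtain ⟨a, b, hpos, hlt⟩ := exists_int_add_int_mul_mem_Ioo irrational_two_mul_re_zeta5_sq
    (show 0 < ε / (5 * (M + 1)) by positivity)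
  set m : ℤ[X] := 5 * (C a + C b * (X + X ^ 4))
  have hm : aeval zeta5 m = ((5 * (a + b * (2 * zeta5.re)) : ℝ) : ℂ) := by
    simp [m, map_ofNat, Complex.add_pow_eq_two_mul_re isPrimitiveRoot_zeta5.pow_eq_one]
  have hm' : aeval (zeta5 ^ 2) m = ((5 * (a + b * (2 * (zeta5 ^ 2).re)) : ℝ) : ℂ) := by
    simp [m, map_ofNat, zeta5_sq_add_pow_four]
  refine ⟨5 * (a + b * (2 * zeta5.re)), ?_, ?_, ?_, ?_⟩
  · intro hc
    have h0 : aeval zeta5 m = aeval zeta5 (0 : ℤ[X]) := by rw [hm, hc]; simp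
    have := isPrimitiveRoot_zeta5.aeval_eq_of_aeval_cyclotomic_eq_zero (by norm_num)
      (isPrimitiveRoot_zeta5_sq.aeval_cyclotomic_int (by norm_num)) h0
    rw [hm', map_zero (aeval (R := ℤ) (zeta5 ^ 2)), Complex.ofReal_eq_zero] at this
    linarith
  · rw [← hm, ← map_mul]
    exact mem_Zzeta5_iff.2 ⟨_, rfl⟩
  · rw [← hm, ← map_mul, starMap_aeval, map_mul, hm', norm_mul, Complex.norm_real,
      Real.norm_of_nonneg (by linarith)]
    calc 5 * (a + b * (2 * (zeta5 ^ 2).re)) * M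
        ≤ 5 * (a + b * (2 * (zeta5 ^ 2).re)) * (M + 1) := by gcongr; linarith
      _ < 5 * (ε / (5 * (M + 1))) * (M + 1) := by gcongr
      _ = ε := by field_simp [(by positivity : (0 : ℝ) < M + 1).ne']
  · have h5 : (5 : ZMod 5) = 0 := rfl
    rw [← hm, ← map_mul, starMap_aeval]
    simp [m, map_ofNat, h5]

theorem interior_pent_nonempty : (interior pent).Nonempty := by
  set S := affineSpan ℝ {z : ℂ | z ^ 5 = 1}
  have h1 : (1 : ℂ) ∈ S := subset_affineSpan ℝ _ (one_pow 5)
  have hroot : ∀ w : ℂ, w ^ 5 = 1 → w - 1 ∈ S.direction := fun w hw =>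
    AffineSubspace.vsub_mem_direction (subset_affineSpan ℝ _ hw) h1
  set ω := zeta5 ^ 2
  have hω : ω ^ 5 = 1 := isPrimitiveRoot_zeta5_sq.pow_eq_one
  have hω4 : (ω ^ 4) ^ 5 = 1 := by rw [← pow_mul, mul_comm, pow_mul, hω, one_pow]
  have hreal : ((2 * ω.re - 2 : ℝ) : ℂ) ∈ S.direction := by
    convert add_mem (hroot ω hω) (hroot _ hω4) using 1
    rw [sub_add_sub_comm, zeta5_sq_add_pow_four]
    push_cast
    ring
  have hne : 2 * ω.re - 2 ≠ 0 := by
    rw [two_mul_re_zeta5_sq]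
    linarith [Real.sqrt_nonneg 5]
  rw [pent, interior_convexHull_nonempty_iff_affineSpan_eq_top,
    ← AffineSubspace.direction_eq_top_iff_of_nonempty ⟨1, h1⟩,
    Submodule.eq_top_iff']
  intro x
  obtain ⟨a, b, rfl⟩ := Complex.exists_eq_ofReal_add_ofReal_mul (w := ω - 1)
    (by simpa using im_zeta5_sq_pos.ne') x
  have ha : (a : ℂ) = (a / (2 * ω.re - 2)) • ((2 * ω.re - 2 : ℝ) : ℂ) := by
    rw [Complex.real_smul, ← Complex.ofReal_mul, div_mul_cancel₀ _ hne]
  rw [ha, ← Complex.real_smul]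
  exact add_mem (S.direction.smul_mem _ hreal) (S.direction.smul_mem _ (hroot ω hω))

theorem mem_LambdaPu_of_starMap {u₀ x : ℂ} (hx : x ∈ Zzeta5) (hpent : (starMap x).1 - u₀ ∈ pent)
    (hcolour : (starMap x).2 = 1) : x ∈ LambdaPu u₀ :=
  ⟨hx, starMap x - (u₀, 0), Or.inl (Or.inl (Or.inl ⟨hpent, by simp [hcolour]⟩)), by simp⟩

theorem exists_mem_LambdaPu_add_real_mul (u₀ : ℂ) {z : ℂ} (hz : z ∈ Zzeta5) :
    ∃ x : ℂ, ∃ c : ℝ, c ≠ 0 ∧ x ∈ LambdaPu u₀ ∧ x + c * z ∈ LambdaPu u₀ := by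
  obtain ⟨q, hq⟩ := interior_pent_nonempty
  obtain ⟨ε, hε, hball⟩ := Metric.isOpen_iff.1 isOpen_interior q hq
  obtain ⟨_, ⟨x, ⟨hx, hcolour⟩, rfl⟩, hxq⟩ := dense_starMap_of_colour_one.exists_mem_open
    Metric.isOpen_ball ((Metric.nonempty_ball (x := u₀ + q)).2 (half_pos hε))
  obtain ⟨c, hc, hcz, hsmall, hcolour'⟩ := exists_real_mul_starMap_lt hz (half_pos hε)
  have hpent : ∀ y : ℂ, dist y (u₀ + q) < ε → y - u₀ ∈ pent := fun y hy =>
    interior_subset (hball (by rwa [Metric.mem_ball, dist_sub_eq_dist_add_left, add_comm]))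
  refine ⟨x, c, hc,
    mem_LambdaPu_of_starMap hx (hpent _ (by linarith [Metric.mem_ball.1 hxq])) hcolour,
    mem_LambdaPu_of_starMap (add_mem_Zzeta5 hx hcz) ?_ ?_⟩
  · rw [starMap_add hx hcz]
    refine hpent _ ?_
    calc dist ((starMap x).1 + (starMap (c * z)).1) (u₀ + q)
        ≤ ‖(starMap (c * z)).1‖ + dist (starMap x).1 (u₀ + q) := by
          rw [← dist_self_add_left]
          exact dist_triangle _ _ _
      _ < ε := by linarith [Metric.mem_ball.1 hxq]
  · rw [starMap_add hx hcz, Prod.snd_add, hcolour, hcolour', add_zero]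

theorem pms_directions_general (Λ : Set ℂ) (hΛ : IsPMS Λ) (u : ℂ) :
    (∃ lam ∈ Λ, ∃ lam' ∈ Λ, lam - lam' ≠ 0 ∧ Par u (lam - lam')) ↔ IsZ5Direction u := by
  obtain ⟨t, u₀, -, rfl⟩ := hΛ
  constructor
  · rintro ⟨_, ⟨x, hx, rfl⟩, _, ⟨y, hy, rfl⟩, hne, hpar⟩
    rw [add_sub_add_left_eq_sub] at hne hpar
    exact ⟨x - y, sub_mem_Zzeta5 hx.1 hy.1, hne, hpar⟩
  · rintro ⟨z, hz, hz0, r, hr, rfl⟩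
    obtain ⟨x, c, hc, hx, hxz⟩ := exists_mem_LambdaPu_add_real_mul u₀ hz
    refine ⟨t + (x + c * (r • u)), ⟨_, hxz, rfl⟩, t + x, ⟨x, hx, rfl⟩, ?_,
      c * r, mul_ne_zero hc hr, ?_⟩
    · rw [add_sub_add_left_eq_sub, add_sub_cancel_left]
      exact mul_ne_zero (Complex.ofReal_ne_zero.2 hc) hz0
    · rw [add_sub_add_left_eq_sub, add_sub_cancel_left, Complex.real_smul, Complex.real_smul,
        Complex.ofReal_mul, mul_assoc]

theorem pms_directions (Λ : Set ℂ) (hΛ : IsPMS Λ) (u : ℂ) (hu : ‖u‖ = 1) :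
    (∃ lam ∈ Λ, ∃ lam' ∈ Λ, lam - lam' ≠ 0 ∧ Par u (lam - lam')) ↔ IsZ5Direction u :=
  pms_directions_general Λ hΛ u

end
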